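/- Every natural number n ≥ 1 appears exactly once in the combined array consisting of the non-prime seeds together with all rays: ℕ≥1 is the disjoint union of (ℕ≥1 \ P) and the rays r_n over non-prime seeds n. -/

import Mathlib

noncomputable def E (n : ℕ) : ℕ := Nat.nth Nat.Prime (n - 1)

def ray (n : ℕ) : Set ℕ := {x | ∃ k : ℕ, 1 ≤ k ∧ E^[k] n = x}

/-!
`E` maps `{n | 1 ≤ n}` bijectively onto the primes and pushes every point strictly upwards.
Following a prime backwards under `E` therefore descends strictly, and must stop at the first
non-prime, which is the seed of its ray; injectivity of `E` makes this backward chain, hence the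
seed and the position on the ray, unique.
-/

section IterateDecomposition

variable {α : Type*} {f : α → α} {D S : Set α}

theorem Set.MapsTo.iterate_mem_of_pos (hf : MapsTo f D S) (hSD : S ⊆ D) {n : α} (hn : n ∈ D)
    {k : ℕ} (hk : 1 ≤ k) : f^[k] n ∈ S := by
  obtain ⟨j, rfl⟩ := Nat.exists_eq_add_of_le' hk
  rw [Function.iterate_succ_apply']
  exact hf ((hf.mono_right hSD).iterate j hn)

theorem Set.InjOn.iterate_eq_iterate_of_notMem (hf : MapsTo f D S) (hSD : S ⊆ D)
    (hinj : InjOn f D) {n n' : α} (hn : n ∈ D \ S) (hn' : n' ∈ D \ S) {k k' : ℕ}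
    (h : f^[k] n = f^[k'] n') : n = n' ∧ k = k' := by
  induction k generalizing k' with
  | zero =>
    cases k' with
    | zero => simpa using h
    | succ j' =>
      rw [Function.iterate_zero_apply] at h
      exact absurd (h ▸ hf.iterate_mem_of_pos hSD hn'.1 (Nat.le_add_left 1 j')) hn.2
  | succ j ih =>
    cases k' with
    | zero =>
      rw [Function.iterate_zero_apply] at h
      exact absurd (h ▸ hf.iterate_mem_of_pos hSD hn.1 (Nat.le_add_left 1 j)) hn'.2
    | succ j' =>
      have hD := hf.mono_right hSD
      rw [Function.iterate_succ_apply', Function.iterate_succ_apply'] at h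
      simpa using ih (hinj (hD.iterate j hn.1) (hD.iterate j' hn'.1) h)

theorem Set.SurjOn.exists_iterate_of_notMem [Preorder α] [WellFoundedLT α]
    (hsurj : SurjOn f D S) (hlt : ∀ x ∈ D, x < f x)
    {x : α} (hx : x ∈ D) : ∃ n ∈ D \ S, ∃ k, f^[k] n = x := by
  induction x using WellFoundedLT.induction with
  | _ x ih =>
    by_cases hxS : x ∈ S
    · obtain ⟨y, hy, rfl⟩ := hsurj hxS
      obtain ⟨n, hn, k, rfl⟩ := ih y (hlt y hy) hy
      exact ⟨n, hn, k + 1, Function.iterate_succ_apply' f k n⟩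
    · exact ⟨x, ⟨hx, hxS⟩, 0, rfl⟩

theorem Set.SurjOn.existsUnique_iterate_of_mem [Preorder α] [WellFoundedLT α]
    (hf : MapsTo f D S) (hSD : S ⊆ D) (hinj : InjOn f D) (hsurj : SurjOn f D S)
    (hlt : ∀ x ∈ D, x < f x) {x : α} (hx : x ∈ S) :
    ∃! nk : α × ℕ, nk.1 ∈ D ∧ nk.1 ∉ S ∧ 1 ≤ nk.2 ∧ f^[nk.2] nk.1 = x := by
  obtain ⟨n, ⟨hnD, hnS⟩, k, rfl⟩ := hsurj.exists_iterate_of_notMem hlt (hSD hx)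
  have hk : 1 ≤ k := Nat.one_le_iff_ne_zero.mpr fun h => hnS (by simpa [h] using hx)
  refine ⟨(n, k), ⟨hnD, hnS, hk, rfl⟩, fun nk ⟨hD, hS, _, h⟩ => ?_⟩
  obtain ⟨rfl, rfl⟩ := hinj.iterate_eq_iterate_of_notMem hf hSD ⟨hD, hS⟩ ⟨hnD, hnS⟩ h
  rfl

end IterateDecomposition

theorem mapsTo_E : Set.MapsTo E {n | 1 ≤ n} {p | p.Prime} :=
  fun n _ => Nat.prime_nth_prime (n - 1)

theorem primes_subset_one_le : {p : ℕ | p.Prime} ⊆ {n | 1 ≤ n} :=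
  fun _ hp => hp.one_lt.le

theorem injOn_E : Set.InjOn E {n | 1 ≤ n} := by
  intro a (ha : 1 ≤ a) b (hb : 1 ≤ b) h
  have := Nat.nth_injective Nat.infinite_setOfPred_prime h
  omega

theorem surjOn_E : Set.SurjOn E {n | 1 ≤ n} {p | p.Prime} :=
  fun p (hp : p.Prime) =>
    ⟨Nat.count Nat.Prime p + 1, Nat.le_add_left 1 _, by simpa [E] using Nat.nth_count hp⟩

theorem lt_E {n : ℕ} (hn : 1 ≤ n) : n < E n := by
  have := Nat.add_two_le_nth_prime (n - 1)
  simp only [E]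
  omega

theorem prime_of_mem_ray {n x : ℕ} (hn : 1 ≤ n) (hx : x ∈ ray n) : x.Prime := by
  obtain ⟨k, hk, rfl⟩ := hx
  exact mapsTo_E.iterate_mem_of_pos primes_subset_one_le (show n ∈ {n | 1 ≤ n} from hn) hk

theorem existsUnique_seed_of_prime {x : ℕ} (hx : x.Prime) :
    ∃! nk : ℕ × ℕ, 1 ≤ nk.1 ∧ ¬ nk.1.Prime ∧ 1 ≤ nk.2 ∧ E^[nk.2] nk.1 = x :=
  surjOn_E.existsUnique_iterate_of_mem mapsTo_E primes_subset_one_le injOn_E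
    (fun _ => lt_E) (show x ∈ {p | p.Prime} from hx)

theorem naturals_partitioned_by_seeds_and_rays :
    ({x : ℕ | 1 ≤ x} =
      {x : ℕ | 1 ≤ x ∧ ¬ x.Prime} ∪ ⋃ n ∈ {n : ℕ | 1 ≤ n ∧ ¬ n.Prime}, ray n) ∧
    Disjoint {x : ℕ | 1 ≤ x ∧ ¬ x.Prime}
      (⋃ n ∈ {n : ℕ | 1 ≤ n ∧ ¬ n.Prime}, ray n) ∧
    (∀ x : ℕ, 1 ≤ x → x.Prime →
      ∃! nk : ℕ × ℕ, 1 ≤ nk.1 ∧ ¬ nk.1.Prime ∧ 1 ≤ nk.2 ∧ E^[nk.2] nk.1 = x) := by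
  have ray_primes : ∀ x ∈ ⋃ n ∈ {n : ℕ | 1 ≤ n ∧ ¬ n.Prime}, ray n, x.Prime := by
    simp only [Set.mem_iUnion]
    rintro x ⟨n, ⟨hn, -⟩, hx⟩
    exact prime_of_mem_ray hn hx
  refine ⟨?_, Set.disjoint_left.mpr fun x hx hray => hx.2 (ray_primes x hray),
    fun x _ hx => existsUnique_seed_of_prime hx⟩
  ext x
  refine ⟨fun (hx : 1 ≤ x) => ?_, ?_⟩
  · by_cases hp : x.Prime
    · obtain ⟨⟨n, k⟩, ⟨hn, hnp, hk, rfl⟩, -⟩ := existsUnique_seed_of_prime hp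
      exact Or.inr (Set.mem_biUnion ⟨hn, hnp⟩ ⟨k, hk, rfl⟩)
    · exact Or.inl ⟨hx, hp⟩
  · rintro (hx | hray)
    · exact hx.1
    · exact (ray_primes x hray).one_lt.le
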